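/- arXiv:1903.06338 — 2 statements merged into one kernel-verified Lean document; each statement's English description precedes it below -/
import Mathlib

section
/- Let a be a positive random variable with E[1/a] < ∞ and let Γ ≥ 0. Then (1 + cΓ) · E[1/(1+aΓ)] ≤ 1, where c = 1/E[1/a]. -/
/-! The map `y ↦ y / (y + Γ)` is concave, so by Jensen's inequality applied to `X = 1 / a`,
`E[1 / (1 + a Γ)] = E[X / (X + Γ)] ≤ m / (m + Γ)` with `m = E[1 / a] = 1 / c`, and
`(1 + c Γ) · m / (m + Γ) = 1`. Jensen is used in its tangent-line form: the function lies
below its tangent at `m`, and integrating the tangent gives its value at `m`. -/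

open MeasureTheory

lemma div_add_le_tangent {y m G : ℝ} (hy : 0 < y + G) (hm : 0 < m + G) (hG : 0 ≤ G) :
    y / (y + G) ≤ m / (m + G) + G / (m + G) ^ 2 * (y - m) := by
  have gap : m / (m + G) + G / (m + G) ^ 2 * (y - m) - y / (y + G)
      = G * (y - m) ^ 2 / ((y + G) * (m + G) ^ 2) := by
    field_simp
    ring
  have : 0 ≤ G * (y - m) ^ 2 / ((y + G) * (m + G) ^ 2) := by positivity
  linarith

lemma integral_pos_of_forall_pos {Ω : Type*} [MeasurableSpace Ω] {μ : Measure Ω} [NeZero μ]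
    {f : Ω → ℝ} (hf : ∀ ω, 0 < f ω) (hfi : Integrable f μ) : 0 < ∫ ω, f ω ∂μ := by
  refine (integral_pos_iff_support_of_nonneg (fun ω => (hf ω).le) hfi).2 ?_
  rw [Function.support_eq_univ fun ω => (hf ω).ne']
  simpa using NeZero.ne μ

lemma integral_div_add_le_div_add {Ω : Type*} [MeasurableSpace Ω] {μ : Measure Ω}
    [IsProbabilityMeasure μ] {X : Ω → ℝ} {G : ℝ} (hG : 0 ≤ G) (hX : ∀ᵐ ω ∂μ, 0 < X ω + G)
    (hm : 0 < (∫ ω, X ω ∂μ) + G) (hXi : Integrable X μ)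
    (hgi : Integrable (fun ω => X ω / (X ω + G)) μ) :
    ∫ ω, X ω / (X ω + G) ∂μ ≤ (∫ ω, X ω ∂μ) / ((∫ ω, X ω ∂μ) + G) := by
  set m := ∫ ω, X ω ∂μ
  have slope_int : Integrable (fun ω => G / (m + G) ^ 2 * (X ω - m)) μ :=
    (hXi.sub (integrable_const m)).const_mul _
  calc ∫ ω, X ω / (X ω + G) ∂μ
      ≤ ∫ ω, (m / (m + G) + G / (m + G) ^ 2 * (X ω - m)) ∂μ :=
        integral_mono_ae hgi ((integrable_const _).add slope_int)
          (hX.mono fun ω hω => div_add_le_tangent hω hm hG)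
    _ = m / (m + G) := by
        rw [integral_add (integrable_const _) slope_int, integral_const_mul,
          integral_sub hXi (integrable_const m)]
        simp [m]

theorem stmt_2_general {Ω : Type*} [MeasurableSpace Ω] (μ : Measure Ω) [IsProbabilityMeasure μ]
    (a : Ω → ℝ) (ha_pos : ∀ ω, 0 < a ω)
    (Γ : ℝ) (hΓ : 0 ≤ Γ)
    (h_int1 : Integrable (fun ω => 1 / a ω) μ)
    (h_int2 : Integrable (fun ω => 1 / (1 + a ω * Γ)) μ)
    (c : ℝ) (hc : c = 1 / ∫ ω, 1 / a ω ∂μ) :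
    (1 + c * Γ) * ∫ ω, 1 / (1 + a ω * Γ) ∂μ ≤ 1 := by
  set m := ∫ ω, 1 / a ω ∂μ
  have hm : 0 < m := integral_pos_of_forall_pos (fun ω => one_div_pos.2 (ha_pos ω)) h_int1
  have integrand_eq : (fun ω => 1 / (1 + a ω * Γ)) = fun ω => 1 / a ω / (1 / a ω + Γ) := by
    funext ω
    have := (ha_pos ω).ne'
    field_simp
  have jensen : ∫ ω, 1 / (1 + a ω * Γ) ∂μ ≤ m / (m + Γ) := by
    rw [integrand_eq] at h_int2 ⊢
    exact integral_div_add_le_div_add hΓ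
      (ae_of_all _ fun ω => by have := ha_pos ω; positivity) (by positivity) h_int1 h_int2
  calc (1 + c * Γ) * ∫ ω, 1 / (1 + a ω * Γ) ∂μ
      ≤ (1 + c * Γ) * (m / (m + Γ)) := by
        gcongr
        rw [hc]
        positivity
    _ = 1 := by
        rw [hc]
        field_simp

theorem stmt_2 {Ω : Type*} [MeasurableSpace Ω] (μ : Measure Ω) [IsProbabilityMeasure μ]
    (a : Ω → ℝ) (ha_meas : Measurable a) (ha_pos : ∀ ω, 0 < a ω)
    (Γ : ℝ) (hΓ : 0 ≤ Γ)
    (h_int1 : Integrable (fun ω => 1 / a ω) μ)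
    (h_int2 : Integrable (fun ω => 1 / (1 + a ω * Γ)) μ)
    (c : ℝ) (hc : c = 1 / ∫ ω, 1 / a ω ∂μ) :
    (1 + c * Γ) * ∫ ω, 1 / (1 + a ω * Γ) ∂μ ≤ 1 :=
  stmt_2_general μ a ha_pos Γ hΓ h_int1 h_int2 c hc
end

section
/- Let a, b be positive random variables, π₁, π₂ > 0 with π₁ + π₂ ≤ 1, and Γ ≥ 0. Define c = (π₁ + π₂)/(π₁·E[1/a] + π₂·E[1/b]). Then π₁·E[log₂(1 + aΓ)] + π₂·E[log₂(1 + bΓ)] ≥ (π₁ + π₂)·log₂(1 + cΓ), assuming all expectations exist and are finite. -/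
open MeasureTheory

lemma tangent_line_log (t y₀ Γ : ℝ) (ht : 0 < t) (hy₀ : 0 < y₀) (hΓ : 0 ≤ Γ) :
    Real.logb 2 (1 + (1/y₀) * Γ) - Γ/(y₀*(y₀+Γ)*Real.log 2) * (1/t - y₀)
      ≤ Real.logb 2 (1 + t * Γ) := by
  have h2 : (0:ℝ) < Real.log 2 := Real.log_pos (by norm_num)
  have hd : (0:ℝ) < y₀ + Γ := by linarith
  have h1 : (0:ℝ) < 1 + t * Γ := by positivity
  have h0 : (0:ℝ) < 1 + (1/y₀) * Γ := by positivity
  set x : ℝ := (1 + t*Γ) / (1 + (1/y₀)*Γ) with hxdef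
  have hx : 0 < x := by positivity
  have hlogx : 1 - 1/x ≤ Real.log x := by
    have h := Real.log_le_sub_one_of_pos (inv_pos.mpr hx)
    rw [Real.log_inv] at h
    have : (1:ℝ)/x = x⁻¹ := one_div x
    linarith
  have hlog : Real.log x = Real.log (1 + t*Γ) - Real.log (1 + (1/y₀)*Γ) :=
    Real.log_div (by positivity) (by positivity)
  have key : - (Γ/(y₀*(y₀+Γ)) * (1/t - y₀)) ≤ 1 - 1/x := by
    rw [hxdef, one_div_div]
    have e : 1 - (1 + 1/y₀*Γ)/(1+t*Γ) + Γ/(y₀*(y₀+Γ)) * (1/t - y₀)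
        = Γ*(1-t*y₀)^2/(t*y₀*(y₀+Γ)*(1+t*Γ)) := by
      field_simp
      ring
    have hp : 0 ≤ Γ*(1-t*y₀)^2/(t*y₀*(y₀+Γ)*(1+t*Γ)) := by positivity
    linarith
  have hstep : Real.log (1 + (1/y₀)*Γ) - (Γ/(y₀*(y₀+Γ)) * (1/t - y₀)) ≤ Real.log (1 + t*Γ) := by
    linarith
  rw [Real.logb, Real.logb]
  have h'' : (Real.log (1 + (1/y₀)*Γ) - (Γ/(y₀*(y₀+Γ)) * (1/t - y₀)))/Real.log 2
      ≤ Real.log (1 + t*Γ)/Real.log 2 := by gcongr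
  rw [sub_div] at h''
  have e : Γ/(y₀*(y₀+Γ)*Real.log 2) * (1/t - y₀) = (Γ/(y₀*(y₀+Γ)) * (1/t - y₀))/Real.log 2 := by
    rw [← div_div]
    ring
  linarith

theorem stmt_12 {Ω : Type*} [MeasurableSpace Ω] (μ : Measure Ω) [IsProbabilityMeasure μ]
    (a b : Ω → ℝ) (ha_meas : Measurable a) (hb_meas : Measurable b)
    (ha_pos : ∀ ω, 0 < a ω) (hb_pos : ∀ ω, 0 < b ω)
    (π₁ π₂ : ℝ) (hπ₁ : 0 < π₁) (hπ₂ : 0 < π₂) (hsum : π₁ + π₂ ≤ 1)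
    (Γ : ℝ) (hΓ : 0 ≤ Γ)
    (ha_int : Integrable (fun ω => 1 / a ω) μ)
    (hb_int : Integrable (fun ω => 1 / b ω) μ)
    (ha_log : Integrable (fun ω => Real.logb 2 (1 + a ω * Γ)) μ)
    (hb_log : Integrable (fun ω => Real.logb 2 (1 + b ω * Γ)) μ)
    (c : ℝ)
    (hc : c = (π₁ + π₂) / (π₁ * ∫ ω, 1 / a ω ∂μ + π₂ * ∫ ω, 1 / b ω ∂μ)) :
    (π₁ + π₂) * Real.logb 2 (1 + c * Γ) ≤
      π₁ * (∫ ω, Real.logb 2 (1 + a ω * Γ) ∂μ) +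
        π₂ * (∫ ω, Real.logb 2 (1 + b ω * Γ) ∂μ) := by
  set A : ℝ := ∫ ω, 1 / a ω ∂μ with hA
  set B : ℝ := ∫ ω, 1 / b ω ∂μ with hB
  have hApos : 0 < A := by
    rw [hA, integral_pos_iff_support_of_nonneg_ae _ ha_int]
    · have : Function.support (fun ω => 1 / a ω) = Set.univ := by
        ext ω; simp [Function.support, (ha_pos ω).ne']
      rw [this]
      simp
    · filter_upwards with ω using (one_div_pos.mpr (ha_pos ω)).le
  have hBpos : 0 < B := by
    rw [hB, integral_pos_iff_support_of_nonneg_ae _ hb_int]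
    · have : Function.support (fun ω => 1 / b ω) = Set.univ := by
        ext ω; simp [Function.support, (hb_pos ω).ne']
      rw [this]
      simp
    · filter_upwards with ω using (one_div_pos.mpr (hb_pos ω)).le
  set y₀ : ℝ := (π₁*A + π₂*B)/(π₁+π₂) with hy₀def
  have hπ : 0 < π₁ + π₂ := by linarith
  have hy₀ : 0 < y₀ := by
    apply div_pos _ hπ
    positivity
  have hceq : c = 1/y₀ := by
    rw [hc, hy₀def, one_div_div]
  set K : ℝ := Γ/(y₀*(y₀+Γ)*Real.log 2) with hK
  -- integral bound for a
  have hmono : ∀ (f : Ω → ℝ), Measurable f → (∀ ω, 0 < f ω) →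
      Integrable (fun ω => 1 / f ω) μ →
      Integrable (fun ω => Real.logb 2 (1 + f ω * Γ)) μ →
      Real.logb 2 (1 + (1/y₀)*Γ) - K * ((∫ ω, 1 / f ω ∂μ) - y₀)
        ≤ ∫ ω, Real.logb 2 (1 + f ω * Γ) ∂μ := by
    intro f hf hfpos hfint hflog
    have hint2 : Integrable (fun ω => Real.logb 2 (1 + (1/y₀)*Γ) - K * (1 / f ω - y₀)) μ := by
      apply Integrable.sub (integrable_const _)
      exact (hfint.sub (integrable_const _)).const_mul K
    have h1 : (∫ ω, (Real.logb 2 (1 + (1/y₀)*Γ) - K * (1 / f ω - y₀)) ∂μ)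
        ≤ ∫ ω, Real.logb 2 (1 + f ω * Γ) ∂μ := by
      apply integral_mono hint2 hflog
      intro ω
      exact tangent_line_log (f ω) y₀ Γ (hfpos ω) hy₀ hΓ
    have hint1 : Integrable (fun ω => K * (1 / f ω - y₀)) μ :=
      (hfint.sub (integrable_const _)).const_mul K
    have heq : (∫ ω, (Real.logb 2 (1 + (1/y₀)*Γ) - K * (1 / f ω - y₀)) ∂μ)
        = Real.logb 2 (1 + (1/y₀)*Γ) - K * ((∫ ω, 1 / f ω ∂μ) - y₀) := by
      rw [integral_sub (integrable_const _) hint1, MeasureTheory.integral_const_mul,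
        integral_sub hfint (integrable_const _), integral_const, integral_const]
      simp
    rw [heq] at h1
    exact h1
  have hIa := hmono a ha_meas ha_pos ha_int ha_log
  have hIb := hmono b hb_meas hb_pos hb_int hb_log
  rw [← hA] at hIa
  rw [← hB] at hIb
  have hbal : π₁ * (A - y₀) + π₂ * (B - y₀) = 0 := by
    rw [hy₀def]
    field_simp
    ring
  have hcrw : 1 + c*Γ = 1 + (1/y₀)*Γ := by rw [hceq]
  rw [hcrw]
  set L : ℝ := Real.logb 2 (1 + (1/y₀)*Γ) with hL
  have h1 : π₁ * (L - K*(A-y₀)) ≤ π₁ * ∫ ω, Real.logb 2 (1 + a ω * Γ) ∂μ :=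
    mul_le_mul_of_nonneg_left hIa hπ₁.le
  have h2 : π₂ * (L - K*(B-y₀)) ≤ π₂ * ∫ ω, Real.logb 2 (1 + b ω * Γ) ∂μ :=
    mul_le_mul_of_nonneg_left hIb hπ₂.le
  have key : π₁*(L - K*(A-y₀)) + π₂*(L - K*(B-y₀)) = (π₁+π₂)*L := by
    linear_combination (-K) * hbal
  linarith
end
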